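/- arXiv:1802.00531 — 2 statements merged into one kernel-verified Lean document; each statement's English description precedes it below -/
import Mathlib

section
/- For any positive integer n and non-negative integer k, the sum of gcd(a-1, b₁, ..., b_k, n) over all units a of Z/nZ and all (not necessarily unit) b₁, ..., b_k in Z/nZ equals φ(n)·σ_k(n), where σ_k(n) = ∑_{d|n} d^k. -/
/-!
Write `g(a, b) = gcd(a - 1, b₁, …, b_k, n)`. Since `g ∣ n`, Gauss's identity gives
`g = ∑_{d ∣ n, d ∣ g} φ(d)`. Exchanging the sums, each divisor `d ∣ n` contributes `φ(d)` times the
number of pairs with `a ≡ 1` and all `bᵢ ≡ 0 (mod d)`. These pairs are the kernels of the surjective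
reductions `(ℤ/nℤ)ˣ → (ℤ/dℤ)ˣ` and `(ℤ/nℤ)ᵏ → (ℤ/dℤ)ᵏ`, of sizes `φ(n)/φ(d)` and `(n/d)ᵏ`, so the
sum is `φ(n) ∑_{d ∣ n} (n/d)ᵏ = φ(n) σ_k(n)`.
-/

open Finset
open scoped Nat

@[to_additive]
theorem MonoidHom.card_filter_eq_one_of_surjective {G H : Type*} [Group G] [Group H] [Fintype G]
    [DecidableEq H] (f : G →* H) (hf : Function.Surjective f) :
    #{g | f g = 1} = Nat.card G / Nat.card H := by
  have : Finite H := Finite.of_surjective f hf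
  have hcard : Nat.card f.ker * Nat.card H = Nat.card G := by
    rw [← f.ker.card_mul_index, Subgroup.index_ker, f.range_eq_top_of_surjective hf,
      Subgroup.card_top]
  rw [← hcard, Nat.mul_div_cancel _ Nat.card_pos, ← Fintype.card_subtype,
    ← Nat.card_eq_fintype_card]
  rfl

theorem Fintype.sum_sum_ite_and {α β M : Type*} [Fintype α] [Fintype β] [AddCommMonoid M]
    (p : α → Prop) (q : β → Prop) [DecidablePred p] [DecidablePred q] (c : M) :
    ∑ a, ∑ b, (if p a ∧ q b then c else 0) = (#{a | p a} * #{b | q b}) • c := by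
  simp only [ite_and, sum_ite_irrel, sum_const_zero, ← sum_filter, sum_const, mul_smul]

theorem Nat.sum_totient_filter_divisors {g n : ℕ} (hn : n ≠ 0) (hg : g ∣ n) :
    ∑ d ∈ n.divisors with d ∣ g, φ d = g := by
  rw [Nat.divisors_filter_dvd_of_dvd hn hg, Nat.sum_totient]

theorem Nat.gcd_gcd_eq_sum_totient (x y : ℕ) {n : ℕ} (hn : n ≠ 0) :
    Nat.gcd x (Nat.gcd y n) = ∑ d ∈ n.divisors, if d ∣ x ∧ d ∣ y then φ d else 0 := by
  rw [← sum_filter]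
  conv_lhs => rw [← Nat.sum_totient_filter_divisors hn
    ((Nat.gcd_dvd_right _ _).trans (Nat.gcd_dvd_right _ _))]
  refine sum_congr (filter_congr fun d hd => ?_) fun _ _ => rfl
  simp [Nat.dvd_gcd_iff, Nat.dvd_of_mem_divisors hd]

namespace ZMod

variable {n d : ℕ} [NeZero n]

theorem dvd_val_iff_castHom_eq_zero (hdn : d ∣ n) (x : ZMod n) :
    d ∣ x.val ↔ castHom hdn (ZMod d) x = 0 := by
  rw [castHom_apply, ← natCast_val, natCast_eq_zero_iff]

theorem dvd_val_sub_one_iff_unitsMap_eq_one (hdn : d ∣ n) (a : (ZMod n)ˣ) :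
    d ∣ ((a : ZMod n) - 1).val ↔ unitsMap hdn a = 1 := by
  rw [dvd_val_iff_castHom_eq_zero hdn, map_sub, map_one, sub_eq_zero, Units.ext_iff]
  rfl

theorem card_units_filter_dvd_val_sub_one (hdn : d ∣ n) :
    #{a : (ZMod n)ˣ | d ∣ ((a : ZMod n) - 1).val} = φ n / φ d := by
  have : NeZero d := ⟨ne_zero_of_dvd_ne_zero (NeZero.ne n) hdn⟩
  simp_rw [dvd_val_sub_one_iff_unitsMap_eq_one hdn]
  rw [MonoidHom.card_filter_eq_one_of_surjective _ (unitsMap_surjective hdn),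
    Nat.card_eq_fintype_card, Nat.card_eq_fintype_card, card_units_eq_totient,
    card_units_eq_totient]

theorem card_pi_filter_dvd_gcd_val (hdn : d ∣ n) {ι : Type*} [Fintype ι] [DecidableEq ι] :
    #{b : ι → ZMod n | d ∣ univ.gcd fun i => (b i).val} = (n / d) ^ Fintype.card ι := by
  have : NeZero d := ⟨ne_zero_of_dvd_ne_zero (NeZero.ne n) hdn⟩
  let f := (castHom hdn (ZMod d)).toAddMonoidHom.compLeft ι
  have hf : Function.Surjective f := (castHom_surjective hdn).comp_left
  have hker (b : ι → ZMod n) : (d ∣ univ.gcd fun i => (b i).val) ↔ f b = 0 := by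
    simp only [Finset.dvd_gcd_iff, mem_univ, true_implies, dvd_val_iff_castHom_eq_zero hdn,
      funext_iff]
    rfl
  simp_rw [hker]
  rw [AddMonoidHom.card_filter_eq_zero_of_surjective f hf, Nat.card_eq_fintype_card,
    Nat.card_eq_fintype_card, Fintype.card_fun, Fintype.card_fun, card, card, Nat.div_pow hdn]

end ZMod

/-- Sury's identity: for a positive integer `n` and `k ≥ 0`,
`∑_{a ∈ (ℤ/nℤ)*, b₁,…,b_k ∈ ℤ/nℤ} gcd(a-1, b₁, …, b_k, n) = φ(n) · σ_k(n)`. -/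
theorem sury_identity (n k : ℕ) [NeZero n] :
    ∑ a : (ZMod n)ˣ, ∑ b : Fin k → ZMod n,
      Nat.gcd ((a : ZMod n) - 1).val
        (Nat.gcd (Finset.univ.gcd fun i => (b i).val) n) =
      Nat.totient n * ArithmeticFunction.sigma k n := by
  calc _ = ∑ a : (ZMod n)ˣ, ∑ d ∈ n.divisors, ∑ b : Fin k → ZMod n,
          if d ∣ ((a : ZMod n) - 1).val ∧ d ∣ univ.gcd fun i => (b i).val then φ d else 0 :=
        sum_congr rfl fun _ _ => (sum_congr rfl fun _ _ =>
          Nat.gcd_gcd_eq_sum_totient _ _ (NeZero.ne n)).trans sum_comm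
    _ = ∑ d ∈ n.divisors, ∑ a : (ZMod n)ˣ, ∑ b : Fin k → ZMod n,
          if d ∣ ((a : ZMod n) - 1).val ∧ d ∣ univ.gcd fun i => (b i).val then φ d else 0 :=
        sum_comm
    _ = ∑ d ∈ n.divisors, φ n * (n / d) ^ k := by
        refine sum_congr rfl fun d hd => ?_
        have hdn := Nat.dvd_of_mem_divisors hd
        rw [Fintype.sum_sum_ite_and, ZMod.card_units_filter_dvd_val_sub_one hdn,
          ZMod.card_pi_filter_dvd_gcd_val hdn, Fintype.card_fin, smul_eq_mul, mul_right_comm,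
          Nat.div_mul_cancel (Nat.totient_dvd_of_dvd hdn)]
    _ = _ := by rw [← mul_sum, Nat.sum_div_divisors n (· ^ k), ArithmeticFunction.sigma_apply]
end

section
/- Let p be a prime, m ≥ 1, n = p^m, and χ a Dirichlet character modulo n with conductor p^t (0 ≤ t ≤ m). For any integer s with 0 ≤ s ≤ m, ∑_{a ∈ (Z/nZ)*} gcd(a-1, p^s)·χ(a) equals (s - t + 1)·(p^m - p^{m-1}) if s ≥ t, and 0 if s < t. -/
/-!
Writing `gcd x d = ∑_{e ∣ d, e ∣ x} φ e` and swapping the sums turns the character sum into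
`∑_{e ∣ d} φ e · ∑_{a ≡ 1 mod e} χ a`. The inner sum runs over the kernel of
`(ℤ/n)ˣ → (ℤ/e)ˣ`, a subgroup of order `φ n / φ e`, so it vanishes unless `χ` is trivial on that
kernel, i.e. unless the conductor of `χ` divides `e`. The whole sum is therefore `φ n` times the
number of divisors of `d` that the conductor divides; for `d = p ^ s` and conductor `p ^ t` these
are the `p ^ k` with `t ≤ k ≤ s`.
-/

open Finset

theorem Nat.gcd_eq_sum_totient_filter_dvd (x : ℕ) {n : ℕ} (hn : n ≠ 0) :
    x.gcd n = ∑ d ∈ n.divisors with d ∣ x, d.totient := by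
  conv_lhs => rw [← Nat.sum_totient (x.gcd n)]
  congr 1
  ext d
  simp [Nat.dvd_gcd_iff, hn, and_comm]

theorem Nat.card_filter_pow_dvd_divisors_prime_pow {p : ℕ} (hp : p.Prime) (s t : ℕ) :
    #{e ∈ (p ^ s).divisors | p ^ t ∣ e} = s + 1 - t := by
  have : {k ∈ range (s + 1) | p ^ t ∣ p ^ k} = Ico t (s + 1) := by
    ext k
    simp [Nat.pow_dvd_pow_iff_le_right hp.one_lt, and_comm]
  rw [Nat.divisors_prime_pow hp, filter_map, card_map]
  simp [this]

theorem Subgroup.sum_filter_mem_hom_units {G R : Type*} [Group G] [Fintype G] [CommRing R]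
    [IsDomain R] (H : Subgroup G) [DecidablePred (· ∈ H)] (f : G →* R) [Decidable (H ≤ f.ker)] :
    ∑ g with g ∈ H, f g = if H ≤ f.ker then (Nat.card H : R) else 0 := by
  rw [sum_subtype (p := (· ∈ H)) _ (fun g ↦ by simp) f]
  split_ifs with hH
  · simp [fun h : H ↦ f.mem_ker.mp (hH h.2), Nat.card_eq_fintype_card]
  · refine sum_hom_units_eq_zero (f.comp H.subtype) fun h ↦ hH fun g hg ↦ ?_
    simpa using DFunLike.congr_fun h ⟨g, hg⟩

theorem ZMod.dvd_val_sub_one_iff_mem_ker_unitsMap {n d : ℕ} [NeZero n] (hd : d ∣ n)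
    (a : (ZMod n)ˣ) : d ∣ (↑a - 1 : ZMod n).val ↔ a ∈ (ZMod.unitsMap hd).ker := by
  rw [← ZMod.natCast_eq_zero_iff, ZMod.natCast_val, MonoidHom.mem_ker, Units.ext_iff,
    ZMod.unitsMap_val, ZMod.cast_sub hd, ZMod.cast_one hd, sub_eq_zero]
  rfl

theorem ZMod.totient_mul_card_ker_unitsMap {n d : ℕ} [NeZero n] (hd : d ∣ n) :
    d.totient * Nat.card (ZMod.unitsMap hd).ker = n.totient := by
  have : NeZero d := ⟨ne_zero_of_dvd_ne_zero (NeZero.ne n) hd⟩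
  rw [← ZMod.card_units_eq_totient, ← ZMod.card_units_eq_totient, ← Nat.card_eq_fintype_card,
    ← Nat.card_eq_fintype_card, ← (ZMod.unitsMap hd).ker.card_mul_index, Subgroup.index_ker,
    MonoidHom.range_eq_top_of_surjective _ (ZMod.unitsMap_surjective hd), Subgroup.card_top,
    mul_comm]

namespace DirichletCharacter

variable {R : Type*} [CommRing R] [IsDomain R] {n : ℕ} [NeZero n] (χ : DirichletCharacter R n)

theorem totient_mul_sum_dvd_val_sub_one {d : ℕ} (hd : d ∣ n) :
    d.totient * ∑ a : (ZMod n)ˣ with d ∣ (↑a - 1 : ZMod n).val, χ a =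
      if χ.conductor ∣ d then (n.totient : R) else 0 := by
  classical
  have hsum := (ZMod.unitsMap hd).ker.sum_filter_mem_hom_units ((Units.coeHom R).comp χ.toUnitHom)
  rw [MonoidHom.ker_comp_of_injective _ _ Units.val_injective,
    ← factorsThrough_iff_ker_unitsMap hd, ← mem_conductorSet_iff,
    mem_conductorSet_iff_conductor_dvd χ hd] at hsum
  simp only [MonoidHom.comp_apply, Units.coeHom_apply, MulChar.coe_toUnitHom] at hsum
  rw [filter_congr fun a _ ↦ ZMod.dvd_val_sub_one_iff_mem_ker_unitsMap hd a, hsum]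
  split_ifs
  · rw [← Nat.cast_mul, ZMod.totient_mul_card_ker_unitsMap hd]
  · exact mul_zero _

theorem sum_gcd_val_sub_one_mul {d : ℕ} (hd : d ∣ n) :
    ∑ a : (ZMod n)ˣ, ((Nat.gcd (↑a - 1 : ZMod n).val d : ℕ) : R) * χ a =
      n.totient * #{e ∈ d.divisors | χ.conductor ∣ e} := by
  have hd0 : d ≠ 0 := ne_zero_of_dvd_ne_zero (NeZero.ne n) hd
  calc ∑ a : (ZMod n)ˣ, ((Nat.gcd (↑a - 1 : ZMod n).val d : ℕ) : R) * χ a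
      = ∑ e ∈ d.divisors, e.totient * ∑ a : (ZMod n)ˣ with e ∣ (↑a - 1 : ZMod n).val, χ a := by
        simp_rw [Nat.gcd_eq_sum_totient_filter_dvd _ hd0, Nat.cast_sum, sum_mul, sum_filter,
          mul_sum, mul_ite, mul_zero]
        exact sum_comm
    _ = ∑ e ∈ d.divisors, if χ.conductor ∣ e then (n.totient : R) else 0 :=
        sum_congr rfl fun e he ↦
          χ.totient_mul_sum_dvd_val_sub_one ((Nat.dvd_of_mem_divisors he).trans hd)
    _ = n.totient * #{e ∈ d.divisors | χ.conductor ∣ e} := by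
        rw [← sum_filter, sum_const, nsmul_eq_mul, mul_comm]

end DirichletCharacter

theorem gcd_char_sum_prime_power_general (p m t s : ℕ) [Fact p.Prime] (hm : 1 ≤ m)
    (χ : DirichletCharacter ℂ (p ^ m)) (ht : χ.conductor = p ^ t)
    (hsm : s ≤ m) :
    (t ≤ s → ∑ a : (ZMod (p ^ m))ˣ,
        (Nat.gcd ((a : ZMod (p ^ m)) - 1).val (p ^ s) : ℂ) * χ a =
      ((s - t + 1) * (p ^ m - p ^ (m - 1)) : ℕ)) ∧
    (s < t → ∑ a : (ZMod (p ^ m))ˣ,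
        (Nat.gcd ((a : ZMod (p ^ m)) - 1).val (p ^ s) : ℂ) * χ a = 0) := by
  have hp : p.Prime := Fact.out
  have : NeZero (p ^ m) := ⟨pow_ne_zero m hp.ne_zero⟩
  have htotient : (p ^ m).totient = p ^ m - p ^ (m - 1) := by
    obtain ⟨k, rfl⟩ := Nat.exists_eq_add_of_le' hm
    rw [Nat.totient_prime_pow_succ hp, Nat.add_sub_cancel, Nat.mul_sub_one, pow_succ]
  rw [χ.sum_gcd_val_sub_one_mul (pow_dvd_pow p hsm), ht,
    Nat.card_filter_pow_dvd_divisors_prime_pow hp, htotient]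
  refine ⟨fun hts ↦ ?_, fun hst ↦ ?_⟩
  · rw [Nat.cast_mul, mul_comm, show s + 1 - t = s - t + 1 by omega]
  · simp [show s + 1 - t = 0 by omega]

/-- For `n = p^m`, `χ` a Dirichlet character mod `n` with conductor `p^t`, and `0 ≤ s ≤ m`:
`∑_{a ∈ (ℤ/nℤ)*} gcd(a-1, p^s) χ(a)` equals `(s-t+1)(p^m - p^(m-1))` if `s ≥ t`, else `0`. -/
theorem gcd_char_sum_prime_power (p m t s : ℕ) [Fact p.Prime] (hm : 1 ≤ m)
    (χ : DirichletCharacter ℂ (p ^ m)) (ht : χ.conductor = p ^ t) (htm : t ≤ m)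
    (hsm : s ≤ m) :
    (t ≤ s → ∑ a : (ZMod (p ^ m))ˣ,
        (Nat.gcd ((a : ZMod (p ^ m)) - 1).val (p ^ s) : ℂ) * χ a =
      ((s - t + 1) * (p ^ m - p ^ (m - 1)) : ℕ)) ∧
    (s < t → ∑ a : (ZMod (p ^ m))ˣ,
        (Nat.gcd ((a : ZMod (p ^ m)) - 1).val (p ^ s) : ℂ) * χ a = 0) :=
  gcd_char_sum_prime_power_general p m t s hm χ ht hsm
end
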